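/- arXiv:2005.09847 — 2 statements merged into one kernel-verified Lean document; each statement's English description precedes it below -/
import Mathlib

section
/- Let A be a graded-commutative ℚ-algebra and let zcl_r(A) denote the greatest n such that there exist n elements in the kernel of the multiplication map A^{⊗r} → A whose product is nonzero, and let cup(A) denote the greatest n such that there exist n elements of positive degree in A whose product is nonzero. Then zcl_{r+1}(A) ≥ zcl_r(A) + cup(A) for all r ≥ 2. -/
open scoped TensorProduct

/-- The multiplication map `μ_r : A^{⊗r} → A`, `a₁ ⊗ ⋯ ⊗ a_r ↦ a₁ ⋯ a_r`. -/
noncomputable def mulAlgHom (A : Type*) [CommRing A] [Algebra ℚ A] (r : ℕ) :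
    (⨂[ℚ] _ : Fin r, A) →ₐ[ℚ] A :=
  PiTensorProduct.liftAlgHom (MultilinearMap.mkPiAlgebra ℚ (Fin r) A)
    (by simp) (by intro x y; simp [Finset.prod_mul_distrib])

/-!
Write `X = ∏ xᵢ ≠ 0`. Replacing each `aⱼ` by a suitable homogeneous component, we may assume
`aⱼ = bⱼ` is homogeneous of degree `dⱼ > 0` with `∏ bⱼ ≠ 0`; put `D = ∑ dⱼ`. Expanding,
`(X ⊗ 1) ∏ⱼ (1 ⊗ bⱼ - bⱼ⁽⁰⁾ ⊗ 1) = ∑_{t} ± X (∏_{j ∉ t} bⱼ)⁽⁰⁾ ⊗ ∏_{j ∈ t} bⱼ`, where `b⁽⁰⁾`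
puts `b` in the first tensor factor of `A^{⊗r}`, and only the term `t = univ` has last factor
of degree `D`. Hence a functional `f ⊗ (g ∘ proj_D)` with
`f X ≠ 0` and `g (∏ bⱼ) ≠ 0` takes the value `f X * g (∏ bⱼ) ≠ 0` on this product.
-/

open PiTensorProduct

section Snoc

variable {M : Type*} {r : ℕ}

lemma Fin.snoc_one_one [One M] : (Fin.snoc (1 : Fin r → M) 1 : Fin (r + 1) → M) = 1 := by
  funext i; cases i using Fin.lastCases <;> simp

lemma Fin.snoc_mul_snoc [Mul M] (v w : Fin r → M) (a b : M) :
    (Fin.snoc v a : Fin (r + 1) → M) * Fin.snoc w b = Fin.snoc (v * w) (a * b) := by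
  funext i; cases i using Fin.lastCases <;> simp

lemma Fin.snoc_mulSingle_one [One M] (i : Fin r) (b : M) :
    (Fin.snoc (Pi.mulSingle i b) 1 : Fin (r + 1) → M) = Pi.mulSingle i.castSucc b := by
  funext j; cases j using Fin.lastCases <;> simp [Pi.mulSingle_apply, (Fin.castSucc_lt_last _).ne]

lemma Pi.mulSingle_last_eq_snoc [One M] (b : M) :
    (Pi.mulSingle (Fin.last r) b : Fin (r + 1) → M) = Fin.snoc 1 b := by
  funext j; cases j using Fin.lastCases <;> simp [(Fin.castSucc_lt_last _).ne]

end Snoc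

section TensorPowers

variable {R A : Type*} [CommSemiring R] [CommSemiring A] [Algebra R A] {r : ℕ}

variable (R A r) in
noncomputable def snocOneAlgHom : (⨂[R] _ : Fin r, A) →ₐ[R] ⨂[R] _ : Fin (r + 1), A :=
  liftAlgHom
    ((LinearMap.applyₗ (1 : A)).compMultilinearMap
      (PiTensorProduct.tprod R (s := fun _ : Fin (r + 1) => A)).curryRight)
    (by simp [one_def, Fin.snoc_one_one])
    (fun v w ↦ by simp [Fin.snoc_mul_snoc])

lemma snocOneAlgHom_tprod (v : Fin r → A) :
    snocOneAlgHom R A r (PiTensorProduct.tprod R v) = PiTensorProduct.tprod R (Fin.snoc v 1) := by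
  simp [snocOneAlgHom]

lemma snocOneAlgHom_singleAlgHom (i : Fin r) (b : A) :
    snocOneAlgHom R A r (singleAlgHom i b) = singleAlgHom i.castSucc b := by
  simp [singleAlgHom, snocOneAlgHom_tprod, Fin.snoc_mulSingle_one]

noncomputable def splitLast (f : (⨂[R] _ : Fin r, A) →ₗ[R] R) (h : A →ₗ[R] R) :
    (⨂[R] _ : Fin (r + 1), A) →ₗ[R] R :=
  lift ((f.smulRight h).compMultilinearMap (PiTensorProduct.tprod R)).uncurryRight

lemma splitLast_tprod (f : (⨂[R] _ : Fin r, A) →ₗ[R] R) (h : A →ₗ[R] R)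
    (v : Fin (r + 1) → A) :
    splitLast f h (PiTensorProduct.tprod R v) =
      f (PiTensorProduct.tprod R (Fin.init v)) * h (v (Fin.last r)) := by
  simp [splitLast]

lemma splitLast_snocOneAlgHom_mul_singleAlgHom_last (f : (⨂[R] _ : Fin r, A) →ₗ[R] R)
    (h : A →ₗ[R] R) (x : ⨂[R] _ : Fin r, A) (b : A) :
    splitLast f h (snocOneAlgHom R A r x * singleAlgHom (Fin.last r) b) = f x * h b := by
  induction x using PiTensorProduct.induction_on with
  | smul_tprod q v =>
    simp [singleAlgHom, snocOneAlgHom_tprod, Pi.mulSingle_last_eq_snoc, Fin.snoc_mul_snoc,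
      splitLast_tprod, mul_assoc]
  | add x y hx hy => rw [map_add, add_mul, map_add, hx, hy, map_add, add_mul]

end TensorPowers

lemma splitLast_snocOneAlgHom_mul_prod_sub {R A κ : Type*} [CommRing R] [CommRing A]
    [Algebra R A] [Fintype κ] [DecidableEq κ] {r : ℕ} (f : (⨂[R] _ : Fin r, A) →ₗ[R] R)
    (h : A →ₗ[R] R) (x : ⨂[R] _ : Fin r, A) (i : Fin r) (b : κ → A) :
    splitLast f h (snocOneAlgHom R A r x *
        ∏ j, (singleAlgHom (Fin.last r) (b j) - singleAlgHom i.castSucc (b j))) =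
      ∑ t ∈ Finset.univ.powerset,
        f (x * singleAlgHom i (∏ j ∈ Finset.univ \ t, -b j)) * h (∏ j ∈ t, b j) := by
  have hsplit : ∀ j, singleAlgHom (Fin.last r) (b j) - singleAlgHom i.castSucc (b j) =
      singleAlgHom (Fin.last r) (b j) + snocOneAlgHom R A r (singleAlgHom i (-b j)) := by
    intro j
    rw [snocOneAlgHom_singleAlgHom, map_neg, sub_eq_add_neg]
  simp_rw [hsplit, Finset.prod_add, Finset.mul_sum, map_sum, ← map_prod]
  refine Finset.sum_congr rfl fun t _ ↦ ?_
  rw [mul_left_comm, ← map_mul, mul_comm, splitLast_snocOneAlgHom_mul_singleAlgHom_last]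

section Graded

open DirectSum

variable {ι A σ κ : Type*} [CommSemiring A] [SetLike σ A] [AddSubmonoidClass σ A] [Fintype κ]

lemma exists_prod_decompose_ne_zero [DecidableEq ι] [AddMonoid ι] (𝒜 : ι → σ) [GradedRing 𝒜]
    {a : κ → A} (ha : ∏ i, a i ≠ 0) : ∃ d : κ → ι, ∏ i, (decompose 𝒜 (a i) (d i) : A) ≠ 0 := by
  classical
  contrapose! ha
  calc ∏ i, a i
      = ∏ i, ∑ j ∈ (decompose 𝒜 (a i)).support, (decompose 𝒜 (a i) j : A) :=
        Finset.prod_congr rfl fun i _ ↦ (sum_support_decompose 𝒜 (a i)).symm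
    _ = ∑ d ∈ Fintype.piFinset fun i ↦ (decompose 𝒜 (a i)).support,
          ∏ i, (decompose 𝒜 (a i) (d i) : A) := Finset.prod_univ_sum _ _
    _ = 0 := Finset.sum_eq_zero fun d _ ↦ ha d

variable (𝒜 : ℕ → σ) [GradedRing 𝒜]

lemma exists_homogeneous_prod_ne_zero {a : κ → A} (ha : ∏ i, a i ≠ 0)
    (ha₀ : ∀ i, (decompose 𝒜 (a i) 0 : A) = 0) :
    ∃ (d : κ → ℕ) (b : κ → A), (∀ i, 0 < d i) ∧ (∀ i, b i ∈ 𝒜 (d i)) ∧ ∏ i, b i ≠ 0 := by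
  obtain ⟨d, hd⟩ := exists_prod_decompose_ne_zero 𝒜 ha
  refine ⟨d, fun i ↦ decompose 𝒜 (a i) (d i), fun i ↦ Nat.pos_of_ne_zero fun hi ↦ hd ?_,
    fun i ↦ SetLike.coe_mem _, hd⟩
  exact Finset.prod_eq_zero (Finset.mem_univ i) (hi ▸ ha₀ i)

lemma decompose_prod_eq_zero_of_ne_univ {d : κ → ℕ} {b : κ → A} (hb : ∀ j, b j ∈ 𝒜 (d j))
    (hd : ∀ j, 0 < d j) {t : Finset κ} (ht : t ≠ Finset.univ) :
    (decompose 𝒜 (∏ j ∈ t, b j) (∑ j, d j) : A) = 0 := by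
  obtain ⟨j, hj⟩ : ∃ j, j ∉ t := by simpa [Finset.eq_univ_iff_forall] using ht
  have hlt : ∑ j ∈ t, d j < ∑ j, d j :=
    Finset.sum_lt_sum_of_subset t.subset_univ (Finset.mem_univ j) hj (hd j) fun _ _ _ ↦ by omega
  exact decompose_of_mem_ne 𝒜 (SetLike.prod_mem_graded 𝒜 d b fun j _ ↦ hb j) hlt.ne

end Graded

lemma snocOneAlgHom_mul_prod_sub_ne_zero {K A κ : Type*} [Field K] [CommRing A] [Algebra K A]
    [Fintype κ] (𝒜 : ℕ → Submodule K A) [GradedAlgebra 𝒜] {r : ℕ}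
    {x : ⨂[K] _ : Fin r, A} (hx : x ≠ 0) (i : Fin r) {d : κ → ℕ} {b : κ → A}
    (hb : ∀ j, b j ∈ 𝒜 (d j)) (hd : ∀ j, 0 < d j) (hprod : ∏ j, b j ≠ 0) :
    snocOneAlgHom K A r x *
      ∏ j, (singleAlgHom (Fin.last r) (b j) - singleAlgHom i.castSucc (b j)) ≠ 0 := by
  classical
  obtain ⟨f, hf⟩ := Module.Projective.exists_dual_ne_zero K hx
  obtain ⟨g, hg⟩ := Module.Projective.exists_dual_ne_zero K hprod
  intro h0
  have key := congrArg (splitLast f (g ∘ₗ GradedAlgebra.proj 𝒜 (∑ j, d j))) h0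
  rw [splitLast_snocOneAlgHom_mul_prod_sub, map_zero,
    Finset.sum_eq_single_of_mem _ (Finset.mem_powerset_self _) fun t _ ht ↦ by
      simp [GradedAlgebra.proj_apply, decompose_prod_eq_zero_of_ne_univ 𝒜 hb hd ht]] at key
  simp [GradedAlgebra.proj_apply,
    DirectSum.decompose_of_mem_same 𝒜 (SetLike.prod_mem_graded 𝒜 d b fun j _ ↦ hb j),
    ← one_def, hf, hg] at key

section MulAlgHom

variable {A : Type*} [CommRing A] [Algebra ℚ A] {r : ℕ}

lemma mulAlgHom_tprod (v : Fin r → A) :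
    mulAlgHom A r (PiTensorProduct.tprod ℚ v) = ∏ i, v i := by
  simp [mulAlgHom, liftAlgHom]

lemma mulAlgHom_singleAlgHom (i : Fin r) (b : A) : mulAlgHom A r (singleAlgHom i b) = b := by
  classical
  simp [singleAlgHom, mulAlgHom_tprod]

lemma mulAlgHom_snocOneAlgHom (x : ⨂[ℚ] _ : Fin r, A) :
    mulAlgHom A (r + 1) (snocOneAlgHom ℚ A r x) = mulAlgHom A r x := by
  induction x using PiTensorProduct.induction_on with
  | smul_tprod q v => simp [snocOneAlgHom_tprod, mulAlgHom_tprod, Fin.prod_snoc]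
  | add x y hx hy => simp [hx, hy]

end MulAlgHom

/-- The inequality `zcl_{r+1}(A) ≥ zcl_r(A) + cup(A)` of Farber–Kishimoto–Stanley, stated
purely algebraically for a (graded-)commutative graded `ℚ`-algebra `A`: if there are `n`
elements of the kernel of `μ_r : A^{⊗r} → A` with nonzero product, and `c` elements of `A` of
positive degree (i.e. with vanishing degree-zero component) with nonzero product, then there
are `n + c` elements of the kernel of `μ_{r+1} : A^{⊗(r+1)} → A` with nonzero product. -/
theorem stmt_10 (A : Type*) [CommRing A] [Algebra ℚ A]
    (𝒜 : ℕ → Submodule ℚ A) [GradedAlgebra 𝒜] (r : ℕ) (hr : 2 ≤ r) (n c : ℕ)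
    (hz : ∃ x : Fin n → ⨂[ℚ] _ : Fin r, A,
      (∀ i, mulAlgHom A r (x i) = 0) ∧ (∏ i, x i) ≠ 0)
    (hc : ∃ a : Fin c → A,
      (∀ i, GradedAlgebra.proj 𝒜 0 (a i) = 0) ∧ (∏ i, a i) ≠ 0) :
    ∃ y : Fin (n + c) → ⨂[ℚ] _ : Fin (r + 1), A,
      (∀ i, mulAlgHom A (r + 1) (y i) = 0) ∧ (∏ i, y i) ≠ 0 := by
  obtain ⟨x, hx_ker, hx_prod⟩ := hz
  obtain ⟨a, ha₀, ha_prod⟩ := hc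
  obtain ⟨d, b, hd, hb, hb_prod⟩ := exists_homogeneous_prod_ne_zero 𝒜 ha_prod
    fun i ↦ by simpa [GradedAlgebra.proj_apply] using ha₀ i
  obtain ⟨m, rfl⟩ : ∃ m, r = m + 1 := ⟨r - 1, by omega⟩
  refine ⟨Fin.addCases (fun i ↦ snocOneAlgHom ℚ A (m + 1) (x i)) fun j ↦
    singleAlgHom (Fin.last (m + 1)) (b j) - singleAlgHom (0 : Fin (m + 1)).castSucc (b j),
    fun i ↦ ?_, ?_⟩
  · cases i using Fin.addCases with
    | left i => simp only [Fin.addCases_left, mulAlgHom_snocOneAlgHom, hx_ker]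
    | right j => simp only [Fin.addCases_right, map_sub, mulAlgHom_singleAlgHom, sub_self]
  · rw [Fin.prod_univ_add]
    simp only [Fin.addCases_left, Fin.addCases_right, ← map_prod]
    exact snocOneAlgHom_mul_prod_sub_ne_zero 𝒜 hx_prod 0 hb hd hb_prod
end

section
/- Let A be a graded-commutative ℚ-algebra, a₁,…,a_n ∈ A elements of positive degree with a₁⋯a_n ≠ 0, and in A^{⊗(r+1)} set ā_i = 1^{⊗r} ⊗ a_i − 1^{⊗(r−1)} ⊗ a_i ⊗ 1. Then each ā_i lies in the kernel K_{r+1} of the multiplication map μ_{r+1} : A^{⊗(r+1)} → A, and the product ā₁⋯ā_n lies in K_{r+1}^n and is nonzero. -/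
/-!
Every `ā_i` is killed by `μ_{r+1}`, which sends each `slot j x` to `x`. For nonvanishing, apply
the algebra map `A^{⊗(r+1)} → A` that is the identity on the last tensor factor and the
projection onto degree `0` on all the others. It sends `ā_i` to `a_i - (a_i)₀ = a_i`, because
`a_i` has no degree-zero part, and hence sends `ā₁ ⋯ ā_n` to `a₁ ⋯ a_n ≠ 0`.
-/

open scoped TensorProduct

/-- `1 ⊗ ⋯ ⊗ x ⊗ ⋯ ⊗ 1` with `x` in the `i`-th tensor factor of `A^{⊗r}`. -/
noncomputable def slot (A : Type*) [CommRing A] [Algebra ℚ A] (r : ℕ) (i : Fin r) (x : A) :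
    ⨂[ℚ] _ : Fin r, A :=
  PiTensorProduct.singleAlgHom (R := ℚ) (A := fun _ : Fin r => A) i x

namespace PiTensorProduct

variable {R ι S : Type*} [CommSemiring R] [Fintype ι] {A : ι → Type*} [∀ i, Semiring (A i)]
  [∀ i, Algebra R (A i)] [CommSemiring S] [Algebra R S]

noncomputable def productMap (f : ∀ i, A i →ₐ[R] S) : (⨂[R] i, A i) →ₐ[R] S :=
  liftAlgHom ((MultilinearMap.mkPiAlgebra R ι S).compLinearMap fun i => (f i).toLinearMap)
    (by simp) (fun x y => by simp [Finset.prod_mul_distrib])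

@[simp]
theorem productMap_tprod (f : ∀ i, A i →ₐ[R] S) (x : ∀ i, A i) :
    productMap f (tprod R x) = ∏ i, f i (x i) := by
  change lift _ (tprod R x) = _
  rw [lift.tprod]
  rfl

@[simp]
theorem productMap_singleAlgHom [DecidableEq ι] (f : ∀ i, A i →ₐ[R] S) (i : ι) (x : A i) :
    productMap f (singleAlgHom i x) = f i x := by
  rw [singleAlgHom_apply, productMap_tprod, Fintype.prod_eq_single i]
  · simp
  · intro k hk
    simp [MonoidHom.mulSingle_apply, Pi.mulSingle_eq_of_ne hk]

end PiTensorProduct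

namespace GradedAlgebra

variable {ι R A : Type*} [DecidableEq ι] [AddCommMonoid ι] [PartialOrder ι]
  [CanonicallyOrderedAdd ι] [CommSemiring R] [Semiring A] [Algebra R A]
  (𝒜 : ι → Submodule R A) [GradedAlgebra 𝒜]

noncomputable def projZeroAlgHom : A →ₐ[R] A :=
  { GradedRing.projZeroRingHom 𝒜 with
    commutes' := fun r =>
      DirectSum.decompose_of_mem_same 𝒜 (SetLike.algebraMap_mem_graded 𝒜 r) }

theorem projZeroAlgHom_apply (x : A) : projZeroAlgHom 𝒜 x = proj 𝒜 0 x := rfl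

end GradedAlgebra

open Pointwise in
theorem Submodule.prod_mem_pow {R A ι : Type*} [CommSemiring R] [CommSemiring A] [Algebra R A]
    [Fintype ι] (M : Submodule R A) {x : ι → A} (hx : ∀ i, x i ∈ M) :
    ∏ i, x i ∈ M ^ Fintype.card ι := by
  refine Submodule.pow_subset_pow M ?_
  rw [← Finset.card_univ, ← Finset.prod_const]
  exact Set.finsetProd_mem_finsetProd _ _ _ fun i _ => hx i

section

variable {A : Type*} [CommRing A] [Algebra ℚ A]

theorem mulAlgHom_eq_productMap (r : ℕ) :
    mulAlgHom A r = PiTensorProduct.productMap fun _ => AlgHom.id ℚ A := by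
  refine AlgHom.toLinearMap_injective <| PiTensorProduct.ext <| MultilinearMap.ext fun x => ?_
  change PiTensorProduct.lift _ (PiTensorProduct.tprod ℚ x) = _
  simp

theorem mulAlgHom_slot_sub_slot {r : ℕ} (j k : Fin r) (x : A) :
    mulAlgHom A r (slot A r j x - slot A r k x) = 0 := by
  simp only [mulAlgHom_eq_productMap, slot, map_sub, PiTensorProduct.productMap_singleAlgHom,
    AlgHom.id_apply, sub_self]

theorem prod_slot_sub_slot_ne_zero (𝒜 : ℕ → Submodule ℚ A) [GradedAlgebra 𝒜] {r : ℕ}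
    {j k : Fin r} (hjk : j ≠ k) {ι : Type*} [Fintype ι] (a : ι → A)
    (hpos : ∀ i, GradedAlgebra.proj 𝒜 0 (a i) = 0) (hne : ∏ i, a i ≠ 0) :
    ∏ i, (slot A r j (a i) - slot A r k (a i)) ≠ 0 := by
  let ψ := PiTensorProduct.productMap
    (Function.update (fun _ => GradedAlgebra.projZeroAlgHom 𝒜) j (AlgHom.id ℚ A))
  have hψ : ∀ i, ψ (slot A r j (a i) - slot A r k (a i)) = a i := fun i => by
    simp only [ψ, slot, map_sub, PiTensorProduct.productMap_singleAlgHom, Function.update_self,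
      Function.update_of_ne hjk.symm, AlgHom.id_apply, GradedAlgebra.projZeroAlgHom_apply, hpos,
      sub_zero]
  intro h
  exact hne (by simpa [hψ] using congrArg ψ h)

end

/-- For a (graded-)commutative graded `ℚ`-algebra `A` and positive-degree elements
`a₁, …, a_n` with `a₁ ⋯ a_n ≠ 0`, the elements `ā_i = 1^{⊗r} ⊗ a_i − 1^{⊗(r-1)} ⊗ a_i ⊗ 1`
of `A^{⊗(r+1)}` lie in the kernel `K_{r+1}` of `μ_{r+1}`, and their product lies in
`K_{r+1}^n` and is nonzero. -/
theorem stmt_11 (A : Type*) [CommRing A] [Algebra ℚ A]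
    (𝒜 : ℕ → Submodule ℚ A) [GradedAlgebra 𝒜] (r : ℕ) (hr : 2 ≤ r) (n : ℕ)
    (a : Fin n → A)
    (hpos : ∀ i, GradedAlgebra.proj 𝒜 0 (a i) = 0)
    (hne : (∏ i, a i) ≠ 0)
    (abar : Fin n → ⨂[ℚ] _ : Fin (r + 1), A)
    (habar : ∀ i, abar i =
      slot A (r + 1) (Fin.last r) (a i) - slot A (r + 1) ⟨r - 1, by omega⟩ (a i)) :
    (∀ i, mulAlgHom A (r + 1) (abar i) = 0) ∧
    (∏ i, abar i) ∈
      (LinearMap.ker (mulAlgHom A (r + 1)).toLinearMap :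
        Submodule ℚ (⨂[ℚ] _ : Fin (r + 1), A)) ^ n ∧
    (∏ i, abar i) ≠ 0 := by
  have hker : ∀ i, mulAlgHom A (r + 1) (abar i) = 0 := fun i => by
    rw [habar i, mulAlgHom_slot_sub_slot]
  refine ⟨hker, ?_, ?_⟩
  · simpa using Submodule.prod_mem_pow _ fun i => LinearMap.mem_ker.mpr (hker i)
  · simp only [habar]
    exact prod_slot_sub_slot_ne_zero 𝒜 (by simp [Fin.ext_iff]; omega) a hpos hne
end
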